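/- In the logic DHMSH, for every set Γ of formulas and all formulas α, β: Γ ⊢ (α' ∨ β') →_H (α ∧ β)'. -/
import Mathlib


/-- Propositional formulas over countably many variables in the language
`∧, ∨, →, ', ⊥, ⊤`. -/
inductive Fm : Type where
  | var : ℕ → Fm
  | bot : Fm
  | top : Fm
  | and : Fm → Fm → Fm
  | or : Fm → Fm → Fm
  | imp : Fm → Fm → Fm
  | neg : Fm → Fm

/-- The abbreviation `α →_H β := α → (α ∧ β)`. -/
def hi (a b : Fm) : Fm := Fm.imp a (Fm.and a b)

/-- Derivability in the Hilbert-style logic `DHMSH` from a set `Γ` of premises: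
axiom schemes (A1)–(A14) together with the rules (SMP) and (SCP). -/
inductive Deriv (Γ : Set Fm) : Fm → Prop where
  | hyp {φ : Fm} : φ ∈ Γ → Deriv Γ φ
  | a1 (α β : Fm) : Deriv Γ (hi α (Fm.or α β))
  | a2 (α β : Fm) : Deriv Γ (hi β (Fm.or α β))
  | a3 (α β γ : Fm) : Deriv Γ (hi (hi α γ) (hi (hi β γ) (hi (Fm.or α β) γ)))
  | a4 (α β : Fm) : Deriv Γ (hi (Fm.and α β) α)
  | a5 (α β γ : Fm) : Deriv Γ (hi (hi γ α) (hi (hi γ β) (hi γ (Fm.and α β))))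
  | a6 : Deriv Γ Fm.top
  | a7 (α : Fm) : Deriv Γ (hi Fm.bot α)
  | a8 (α β γ : Fm) : Deriv Γ (hi (hi (Fm.and α β) γ) (hi α (hi β γ)))
  | a9 (α β γ : Fm) : Deriv Γ (hi (hi α (hi β γ)) (hi (Fm.and α β) γ))
  | a10 (α β γ : Fm) :
      Deriv Γ (hi (hi α β) (hi (hi β α) (hi (Fm.imp α γ) (Fm.imp β γ))))
  | a11 (α β γ : Fm) :
      Deriv Γ (hi (hi α β) (hi (hi β α) (hi (Fm.imp γ β) (Fm.imp γ α))))
  | a12 : Deriv Γ (hi Fm.top (Fm.neg Fm.bot))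
  | a13 : Deriv Γ (hi (Fm.neg Fm.top) Fm.bot)
  | a14 (α β : Fm) : Deriv Γ (hi (Fm.neg (Fm.and α β)) (Fm.or (Fm.neg α) (Fm.neg β)))
  | smp {φ γ : Fm} : Deriv Γ φ → Deriv Γ (hi φ γ) → Deriv Γ γ
  | scp {φ γ : Fm} : Deriv Γ (hi φ γ) → Deriv Γ (hi (Fm.neg γ) (Fm.neg φ))

namespace DhmshAux

open Fm

/-- Pairing rule from (A5). -/
lemma pair {Γ : Set Fm} {c a b : Fm} (h1 : Deriv Γ (hi c a)) (h2 : Deriv Γ (hi c b)) :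
    Deriv Γ (hi c (Fm.and a b)) :=
  Deriv.smp h2 (Deriv.smp h1 (Deriv.a5 a b c))

/-- Weakening: a theorem can be prefixed by any antecedent. -/
lemma weak {Γ : Set Fm} {θ : Fm} (a : Fm) (h : Deriv Γ θ) : Deriv Γ (hi a θ) :=
  Deriv.smp h (Deriv.smp (Deriv.a4 θ a) (Deriv.a8 θ a θ))

/-- Reflexivity of `→_H`. -/
lemma hiRefl (Γ : Set Fm) (φ : Fm) : Deriv Γ (hi φ φ) := by
  -- y := (φ∧φ)∨φ, Y := φ∧y
  set y := Fm.or (Fm.and φ φ) φ with hy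
  set Y := Fm.and φ y with hY
  -- P : φ → (φ ∧ y)  i.e. hi φ y, which is φ → Y
  have P : Deriv Γ (Fm.imp φ Y) := Deriv.a2 (Fm.and φ φ) φ
  have E1 : Deriv Γ (hi Y (Fm.and φ φ)) := pair (Deriv.a4 φ y) (Deriv.a4 φ y)
  have E2 : Deriv Γ (hi (Fm.and φ φ) Y) :=
    pair (Deriv.a4 φ φ) (Deriv.a1 (Fm.and φ φ) φ)
  have h11 := Deriv.a11 (Γ := Γ) (Fm.and φ φ) Y φ
  have h := Deriv.smp E1 (Deriv.smp E2 h11)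
  -- h : hi (φ → Y) (φ → (φ∧φ))
  have : Deriv Γ (Fm.imp φ (Fm.and φ φ)) := Deriv.smp P h
  exact this

/-- Second projection for `→_H`. -/
lemma proj2 (Γ : Set Fm) (α β : Fm) : Deriv Γ (hi (Fm.and α β) β) :=
  Deriv.smp (weak α (hiRefl Γ β)) (Deriv.a9 α β β)

end DhmshAux

/-- In `DHMSH`: `Γ ⊢ (α' ∨ β') →_H (α ∧ β)'`. -/
theorem dhmsh_deMorgan_and_neg :
    ∀ (Γ : Set Fm) (α β : Fm),
      Deriv Γ (hi (Fm.or (Fm.neg α) (Fm.neg β)) (Fm.neg (Fm.and α β))) := by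
  intro Γ α β
  have h1 : Deriv Γ (hi (Fm.neg α) (Fm.neg (Fm.and α β))) := Deriv.scp (Deriv.a4 α β)
  have h2 : Deriv Γ (hi (Fm.neg β) (Fm.neg (Fm.and α β))) :=
    Deriv.scp (DhmshAux.proj2 Γ α β)
  exact Deriv.smp h2 (Deriv.smp h1
    (Deriv.a3 (Fm.neg α) (Fm.neg β) (Fm.neg (Fm.and α β))))
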